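/- Continuity of the strictly convex QP solution in the linear term: let Q be symmetric positive definite and C ⊆ ℝⁿ a nonempty closed convex set. Then the map q ↦ argmin_{z ∈ C} (1/2)zᵀQz + qᵀz is continuous (indeed Lipschitz) in q. -/

import Mathlib

/-! At a minimiser `x` of `½ B z z + ⟪q, z⟫` over a convex set `C`, the derivative along every
segment into `C` is nonnegative. Adding these variational inequalities for `(q₁, x₁)` towards `x₂`
and for `(q₂, x₂)` towards `x₁` gives `B d d ≤ ⟪q₁ - q₂, -d⟫` with `d = x₁ - x₂`, and coercivity
`μ ‖d‖² ≤ B d d` with Cauchy–Schwarz yields `μ ‖d‖ ≤ ‖q₁ - q₂‖`. -/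

open Matrix

open Filter Topology in
theorem nonneg_of_forall_mul_add_sq_mul_nonneg {a b : ℝ}
    (h : ∀ t : ℝ, 0 < t → t ≤ 1 → 0 ≤ t * a + t ^ 2 * b) : 0 ≤ a := by
  have hlim : Tendsto (fun t : ℝ => a + t * b) (𝓝[>] 0) (𝓝 a) := by
    have : Continuous fun t : ℝ => a + t * b := by fun_prop
    simpa using (this.tendsto 0).mono_left nhdsWithin_le_nhds
  refine ge_of_tendsto hlim ?_
  filter_upwards [Ioo_mem_nhdsGT one_pos] with t ht
  have := h t ht.1 ht.2.le
  nlinarith [ht.1]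

section QuadraticMinimization

variable {E : Type*}

theorem LinearMap.BilinForm.apply_add_smul_self [AddCommGroup E] [Module ℝ E]
    (B : LinearMap.BilinForm ℝ E) (x d : E) (t : ℝ) :
    B (x + t • d) (x + t • d) = B x x + t * (B x d + B d x) + t ^ 2 * B d d := by
  simp only [map_add, map_smul, LinearMap.add_apply, LinearMap.smul_apply, smul_eq_mul]
  ring

variable [NormedAddCommGroup E] [InnerProductSpace ℝ E]

open RealInnerProductSpace

theorem IsMinOn.quadratic_variational_inequality {B : LinearMap.BilinForm ℝ E} {q x y : E}
    {C : Set E} (hC : Convex ℝ C)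
    (hx : IsMinOn (fun z => (1 / 2) * B z z + ⟪q, z⟫) C x) (hxC : x ∈ C) (hy : y ∈ C) :
    0 ≤ (1 / 2) * (B x (y - x) + B (y - x) x) + ⟪q, y - x⟫ := by
  refine nonneg_of_forall_mul_add_sq_mul_nonneg (b := (1 / 2) * B (y - x) (y - x))
    fun t ht0 ht1 => ?_
  have hmem : x + t • (y - x) ∈ C := hC.add_smul_sub_mem hxC hy ⟨ht0.le, ht1⟩
  have := isMinOn_iff.1 hx _ hmem
  simp only [B.apply_add_smul_self, inner_add_right, inner_smul_right] at this
  linarith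

theorem IsMinOn.norm_sub_le_of_quadratic {B : LinearMap.BilinForm ℝ E} {μ : ℝ}
    (hB : ∀ z, μ * ‖z‖ ^ 2 ≤ B z z) {C : Set E} (hC : Convex ℝ C) {q₁ q₂ x₁ x₂ : E}
    (hx₁ : IsMinOn (fun z => (1 / 2) * B z z + ⟪q₁, z⟫) C x₁) (hx₁C : x₁ ∈ C)
    (hx₂ : IsMinOn (fun z => (1 / 2) * B z z + ⟪q₂, z⟫) C x₂) (hx₂C : x₂ ∈ C) :
    μ * ‖x₁ - x₂‖ ≤ ‖q₁ - q₂‖ := by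
  have h₁ := hx₁.quadratic_variational_inequality hC hx₁C hx₂C
  have h₂ := hx₂.quadratic_variational_inequality hC hx₂C hx₁C
  have hBd : B (x₁ - x₂) (x₁ - x₂) ≤ ⟪q₁ - q₂, x₂ - x₁⟫ := by
    simp only [map_sub, LinearMap.sub_apply, inner_sub_left, inner_sub_right] at h₁ h₂ ⊢
    linarith
  have hsq : μ * ‖x₁ - x₂‖ * ‖x₁ - x₂‖ ≤ ‖q₁ - q₂‖ * ‖x₁ - x₂‖ := by
    calc μ * ‖x₁ - x₂‖ * ‖x₁ - x₂‖ = μ * ‖x₁ - x₂‖ ^ 2 := by ring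
      _ ≤ B (x₁ - x₂) (x₁ - x₂) := hB _
      _ ≤ ⟪q₁ - q₂, x₂ - x₁⟫ := hBd
      _ ≤ ‖q₁ - q₂‖ * ‖x₂ - x₁‖ := real_inner_le_norm _ _
      _ = ‖q₁ - q₂‖ * ‖x₁ - x₂‖ := by rw [norm_sub_rev x₂ x₁]
  rcases (norm_nonneg (x₁ - x₂)).eq_or_lt with h0 | hpos
  · simp [← h0]
  · exact le_of_mul_le_mul_right hsq hpos

theorem lipschitzWith_of_forall_isMinOn_quadratic {B : LinearMap.BilinForm ℝ E} {μ : ℝ}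
    (hμ : 0 < μ) (hB : ∀ z, μ * ‖z‖ ^ 2 ≤ B z z) {C : Set E} (hC : Convex ℝ C) {sol : E → E}
    (hsol : ∀ q, sol q ∈ C ∧ IsMinOn (fun z => (1 / 2) * B z z + ⟪q, z⟫) C (sol q)) :
    LipschitzWith (1 / μ).toNNReal sol := by
  refine LipschitzWith.of_dist_le_mul fun q₁ q₂ => ?_
  rw [Real.coe_toNNReal _ (by positivity), dist_eq_norm, dist_eq_norm, one_div_mul_eq_div,
    le_div_iff₀' hμ]
  exact IsMinOn.norm_sub_le_of_quadratic hB hC (hsol q₁).2 (hsol q₁).1 (hsol q₂).2 (hsol q₂).1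

end QuadraticMinimization

theorem qp_solution_lipschitz_in_q_general {n : ℕ}
    (Q : Matrix (Fin n) (Fin n) ℝ)
    (μ : ℝ) (hμ : 0 < μ)
    (hμev : ∀ z : EuclideanSpace ℝ (Fin n), μ * ‖z‖ ^ 2 ≤ z ⬝ᵥ Q.mulVec z)
    (C : Set (EuclideanSpace ℝ (Fin n)))
    (hCconv : Convex ℝ C)
    (sol : EuclideanSpace ℝ (Fin n) → EuclideanSpace ℝ (Fin n))
    (hsol : ∀ q : EuclideanSpace ℝ (Fin n), sol q ∈ C ∧
      ∀ z ∈ C, (1 / 2) * (sol q ⬝ᵥ Q.mulVec (sol q)) + q ⬝ᵥ sol q ≤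
        (1 / 2) * (z ⬝ᵥ Q.mulVec z) + q ⬝ᵥ z) :
    Continuous sol ∧ LipschitzWith (Real.toNNReal (1 / μ)) sol := by
  let e := (WithLp.linearEquiv 2 ℝ (Fin n → ℝ)).toLinearMap
  let B : LinearMap.BilinForm ℝ (EuclideanSpace ℝ (Fin n)) := (toBilin' Q).comp e e
  have hBQ (z : EuclideanSpace ℝ (Fin n)) : B z z = z ⬝ᵥ Q.mulVec z :=
    toBilin'_apply' Q z.ofLp z.ofLp
  have hinner (q z : EuclideanSpace ℝ (Fin n)) : inner ℝ q z = q ⬝ᵥ z := by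
    rw [EuclideanSpace.inner_eq_star_dotProduct, star_trivial, dotProduct_comm]
  have hlip : LipschitzWith (1 / μ).toNNReal sol :=
    lipschitzWith_of_forall_isMinOn_quadratic (B := B) hμ (by simpa only [hBQ] using hμev) hCconv
      fun q => ⟨(hsol q).1, isMinOn_iff.2 (by simpa only [hBQ, hinner] using (hsol q).2)⟩
  exact ⟨hlip.continuous, hlip⟩

theorem qp_solution_lipschitz_in_q {n : ℕ}
    (Q : Matrix (Fin n) (Fin n) ℝ) (hQsymm : Q.IsSymm) (hQ : Q.PosDef)
    (μ : ℝ) (hμ : 0 < μ)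
    (hμev : ∀ z : EuclideanSpace ℝ (Fin n), μ * ‖z‖ ^ 2 ≤ z ⬝ᵥ Q.mulVec z)
    (C : Set (EuclideanSpace ℝ (Fin n)))
    (hCne : C.Nonempty) (hCclosed : IsClosed C) (hCconv : Convex ℝ C)
    (sol : EuclideanSpace ℝ (Fin n) → EuclideanSpace ℝ (Fin n))
    (hsol : ∀ q : EuclideanSpace ℝ (Fin n), sol q ∈ C ∧
      ∀ z ∈ C, (1 / 2) * (sol q ⬝ᵥ Q.mulVec (sol q)) + q ⬝ᵥ sol q ≤
        (1 / 2) * (z ⬝ᵥ Q.mulVec z) + q ⬝ᵥ z) :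
    Continuous sol ∧ LipschitzWith (Real.toNNReal (1 / μ)) sol :=
  qp_solution_lipschitz_in_q_general Q μ hμ hμev C hCconv sol hsol
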